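/- arXiv:2602.15722 — 2 statements merged into one kernel-verified Lean document; each statement's English description precedes it below -/
import Mathlib

section
/- Let Ỹ = [[1, x̃ᵀ], [x̃, X̃]] be a symmetric positive semidefinite (n+1)×(n+1) matrix, let a ∈ ℝⁿ and b ∈ ℝ, and suppose aᵀ X̃ a - 2b aᵀ x̃ + b² = 0. Then aᵀ x̃ = b and aᵀ X̃ a = b². -/
open Matrix Finset

/-- If `Ỹ = [[1, x̃ᵀ],[x̃, X̃]] ⪰ 0` and `aᵀX̃a - 2b aᵀx̃ + b² = 0`,
then `aᵀx̃ = b` and `aᵀX̃a = b²`. -/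
theorem homogenized_forces_linear (n : ℕ)
    (Y : Matrix (Fin (n + 1)) (Fin (n + 1)) ℝ) (hY : Y.PosSemidef)
    (h00 : Y 0 0 = 1) (a : Fin n → ℝ) (b : ℝ)
    (h : (∑ i, ∑ j, a i * Y i.succ j.succ * a j)
        - 2 * b * (∑ i, a i * Y 0 i.succ) + b ^ 2 = 0) :
    (∑ i, a i * Y 0 i.succ) = b ∧
      (∑ i, ∑ j, a i * Y i.succ j.succ * a j) = b ^ 2 := by
  set v : Fin (n + 1) → ℝ := Fin.cons (-b) a with hv
  have hsym : ∀ i : Fin n, Y i.succ 0 = Y 0 i.succ := by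
    intro i
    have := congrFun (congrFun hY.isHermitian i.succ) 0
    simpa [Matrix.conjTranspose_apply] using this.symm
  have key : ∀ i : Fin n, a i * (Y i.succ 0 * -b + ∑ j, Y i.succ j.succ * a j)
      = (-b) * (a i * Y 0 i.succ) + ∑ j, a i * Y i.succ j.succ * a j := by
    intro i
    rw [hsym, mul_add, Finset.mul_sum]
    congr 1
    · ring
    · exact Finset.sum_congr rfl fun j _ => by ring
  have hquad : star v ⬝ᵥ Y *ᵥ v = 0 := by
    rw [← h]
    simp only [star_trivial, dotProduct, mulVec, Fin.sum_univ_succ, Fin.cons_zero,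
      Fin.cons_succ, hv, h00]
    rw [Finset.sum_congr rfl fun i _ => key i, Finset.sum_add_distrib, ← Finset.mul_sum,
      Finset.sum_congr (rfl : (Finset.univ : Finset (Fin n)) = Finset.univ)
        fun (j : Fin n) _ => mul_comm (Y 0 j.succ) (a j)]
    ring
  have hker : Y *ᵥ v = 0 := (hY.dotProduct_mulVec_zero_iff v).mp hquad
  have h0 : (Y *ᵥ v) 0 = 0 := by rw [hker]; rfl
  have hlin : (∑ i, a i * Y 0 i.succ) = b := by
    have : ∑ i : Fin n, Y 0 i.succ * a i = b := by
      have := h0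
      simp only [mulVec, dotProduct, Fin.sum_univ_succ, Fin.cons_zero, Fin.cons_succ,
        hv, h00] at this
      linarith
    rw [← this]
    apply Finset.sum_congr rfl; intro i _; ring
  refine ⟨hlin, ?_⟩
  have := h
  rw [hlin] at this
  nlinarith [this]
end

section
/- Consider the setting of the separable cost-minimization problem with value function V(D) and a relaxation value function V^Rel with V^Rel(D) ≤ V(D) for all D. Let π ∈ ∂V^Rel(D), let (x^Feas, r^Feas) be a feasible solution at demand D with total cost z^Feas(D) = Σ_g C_g(x_g^Feas), and define for each g the lost opportunity cost U_g(π) = max_{x_g ∈ X_g}(⟨π_{k(g)}, s_g⟩ − C_g(x_g)) − (⟨π_{k(g)}, s_g^Feas⟩ − C_g(x_g^Feas)), assuming the maxima are attained. Then Σ_g U_g(π) ≤ z^Feas(D) − V^Rel(D). -/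
open Matrix

/-- Lost opportunity cost bound: if prices `π` are a subgradient of a
relaxation's value function `V^Rel ≤ V`, then the total lost opportunity cost
is bounded by the gap between the feasible cost and the relaxation value. -/
theorem lost_opportunity_cost_bound
    {G : Type*} [Fintype G] {m : ℕ} (k : G → ℕ)
    (α : G → Type*) (X : ∀ g, Set (α g)) (hX : ∀ g, (X g).Nonempty)
    (C : ∀ g, α g → ℝ) (s : ∀ g, α g → (Fin (k g) → ℝ))
    (A : ∀ g, (Fin (k g) → ℝ) →ₗ[ℝ] (Fin m → ℝ))
    (R : Set (Fin m → ℝ)) (hR : R.Nonempty)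
    (V : (Fin m → ℝ) → EReal)
    (hV : ∀ D', V D' =
      ⨅ (x : ∀ g, α g) (_ : ∀ g, x g ∈ X g) (r : Fin m → ℝ) (_ : r ∈ R)
        (_ : (∑ g, A g (s g (x g))) - r = D'),
        ((∑ g, C g (x g) : ℝ) : EReal))
    (VRel : (Fin m → ℝ) → ℝ)
    (hRel : ∀ D', ((VRel D' : ℝ) : EReal) ≤ V D')
    (D π : Fin m → ℝ)
    (hsub : ∀ D', VRel D + π ⬝ᵥ (D' - D) ≤ VRel D')
    -- feasible solution (x^Feas, r^Feas) at demand D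
    (xF : ∀ g, α g) (hxF : ∀ g, xF g ∈ X g)
    (rF : Fin m → ℝ) (hrF : rF ∈ R)
    (hbal : (∑ g, A g (s g (xF g))) - rF = D)
    -- attained individual profit maxima
    (M : G → ℝ)
    (hM : ∀ g, IsGreatest ((fun x => π ⬝ᵥ (A g (s g x)) - C g x) '' X g) (M g)) :
    (∑ g, (M g - (π ⬝ᵥ (A g (s g (xF g))) - C g (xF g)))) ≤
      (∑ g, C g (xF g)) - VRel D := by

  -- choose maximizers
  have hch : ∀ g, ∃ x ∈ X g, π ⬝ᵥ (A g (s g x)) - C g x = M g := by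
    intro g
    obtain ⟨x, hx, hxe⟩ := (hM g).1
    exact ⟨x, hx, hxe⟩
  choose x hxX hxM using hch
  set D' : Fin m → ℝ := (∑ g, A g (s g (x g))) - rF with hD'
  have hVle : V D' ≤ ((∑ g, C g (x g) : ℝ) : EReal) := by
    rw [hV D']
    exact iInf_le_of_le x (iInf_le_of_le hxX (iInf_le_of_le rF
      (iInf_le_of_le hrF (iInf_le_of_le rfl le_rfl))))
  have hRel' : VRel D' ≤ ∑ g, C g (x g) := by
    have := (hRel D').trans hVle
    exact_mod_cast this
  have hkey : VRel D + π ⬝ᵥ (D' - D) ≤ ∑ g, C g (x g) := (hsub D').trans hRel'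
  have hdot : π ⬝ᵥ (D' - D) =
      (∑ g, π ⬝ᵥ (A g (s g (x g)))) - ∑ g, π ⬝ᵥ (A g (s g (xF g))) := by
    rw [hD', ← hbal]
    have h1 : ((∑ g, A g (s g (x g))) - rF) - ((∑ g, A g (s g (xF g))) - rF)
        = (∑ g, A g (s g (x g))) - (∑ g, A g (s g (xF g))) := by ring
    have hps : ∀ (f : ∀ g, α g), π ⬝ᵥ (∑ g, A g (s g (f g))) = ∑ g, π ⬝ᵥ (A g (s g (f g))) := by
      intro f
      simp only [dotProduct, Finset.sum_apply, Finset.mul_sum]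
      exact Finset.sum_comm
    rw [h1, dotProduct_sub, hps, hps]
  have hSM : ∑ g, M g = (∑ g, π ⬝ᵥ (A g (s g (x g)))) - ∑ g, C g (x g) := by
    rw [← Finset.sum_sub_distrib]
    exact (Finset.sum_congr rfl fun g _ => (hxM g).symm)
  rw [Finset.sum_sub_distrib, Finset.sum_sub_distrib]
  rw [hdot] at hkey
  rw [hSM]
  linarith
end
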